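/- For G ⊆ ℝ[X₁,…,Xₙ], the scalar quadratic module Q_G in ℝ[X̄] is archimedean if and only if the quadratic module M_G generated by G·I in ℝ[X̄]^{t×t} is archimedean. -/

import Mathlib

open Matrix MvPolynomial

/-- Membership in the quadratic module `Q_G` generated by `G` in `ℝ[X̄]`. -/
def InQ (n : ℕ) (G : Set (MvPolynomial (Fin n) ℝ)) (f : MvPolynomial (Fin n) ℝ) : Prop :=
  ∃ (N : ℕ) (g p : Fin N → MvPolynomial (Fin n) ℝ),
    (∀ i, g i = 1 ∨ g i ∈ G) ∧ f = ∑ i, (p i) ^ 2 * g i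

/-- Membership in the quadratic module generated by `G` in `ℝ[X̄]^{t×t}`. -/
def InQM (n t : ℕ) (G : Set (Matrix (Fin t) (Fin t) (MvPolynomial (Fin n) ℝ)))
    (f : Matrix (Fin t) (Fin t) (MvPolynomial (Fin n) ℝ)) : Prop :=
  ∃ (N : ℕ) (g p : Fin N → Matrix (Fin t) (Fin t) (MvPolynomial (Fin n) ℝ)),
    (∀ i, g i = 1 ∨ g i ∈ G) ∧ f = ∑ i, (p i)ᵀ * g i * p i

/-!
If `N_ij - a_ij²` lie in `Q_G` for all entries of `a`, then `(∑ N_ij - tr(aᵀa)) • I` lies in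
`M_G`, and `tr(aᵀa) • I - aᵀa` is a sum of hermitian squares: applied to the rows `v` of `a`, the
Lagrange identity `2 (|v|² I - v vᵀ) = ∑_{i,j} wᵢⱼ wᵢⱼᵀ` with `wᵢⱼ = vᵢ eⱼ - vⱼ eᵢ` does it.
Conversely, the trace maps `M_G` into `Q_G`, because the trace of a hermitian square is a sum of
squares; applied to `N - aᵀa` with `a` the matrix whose only nonzero entry is `p`, it gives
`t N - p² ∈ Q_G`.
-/

namespace Matrix

variable {m n R : Type*} [Fintype m] [CommRing R]

theorem transpose_mul_self_eq_sum_vecMulVec (a : Matrix m n R) :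
    aᵀ * a = ∑ i, vecMulVec (a i) (a i) := by
  ext k l
  simp [mul_apply, Matrix.sum_apply, vecMulVec_apply]

theorem sum_vecMulVec_lagrange [DecidableEq m] (v : m → R) :
    ∑ i, ∑ j, vecMulVec (v i • Pi.single j 1 - v j • Pi.single i 1)
        (v i • Pi.single j 1 - v j • Pi.single i 1) =
      2 • ((v ⬝ᵥ v) • 1 - vecMulVec v v) := by
  ext k l
  simp [vecMulVec_apply, Matrix.sum_apply, Pi.single_apply, sub_mul, mul_sub,
    Finset.sum_sub_distrib, one_apply, dotProduct]
  split_ifs <;> ring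

theorem trace_transpose_mul_self [Fintype n] (a : Matrix m n R) :
    (aᵀ * a).trace = ∑ i, ∑ j, a i j ^ 2 := by
  simp only [trace, diag, mul_apply, transpose_apply, sq]
  exact Finset.sum_comm

end Matrix

variable {n t : ℕ}

namespace InQ

variable {G : Set (MvPolynomial (Fin n) ℝ)}

theorem of_fintype {ι : Type*} [Fintype ι] (g p : ι → MvPolynomial (Fin n) ℝ)
    (hg : ∀ i, g i = 1 ∨ g i ∈ G) : InQ n G (∑ i, p i ^ 2 * g i) :=
  ⟨Fintype.card ι, g ∘ (Fintype.equivFin ι).symm, p ∘ (Fintype.equivFin ι).symm,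
    fun _ => hg _, (Equiv.sum_comp _ _).symm⟩

theorem sq_mul (p : MvPolynomial (Fin n) ℝ) {c : MvPolynomial (Fin n) ℝ} (hc : c = 1 ∨ c ∈ G) :
    InQ n G (p ^ 2 * c) := by
  simpa using of_fintype (G := G) (ι := Unit) (fun _ => c) (fun _ => p) fun _ => hc

theorem sum {ι : Type*} [Fintype ι] {f : ι → MvPolynomial (Fin n) ℝ}
    (hf : ∀ i, InQ n G (f i)) : InQ n G (∑ i, f i) := by
  choose N g p hg hfgp using hf
  simp_rw [hfgp]
  rw [← Fintype.sum_sigma']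
  exact of_fintype _ _ fun x => hg x.1 x.2

end InQ

namespace InQM

variable {G : Set (Matrix (Fin t) (Fin t) (MvPolynomial (Fin n) ℝ))}
  {f f' : Matrix (Fin t) (Fin t) (MvPolynomial (Fin n) ℝ)}

theorem of_fintype {ι : Type*} [Fintype ι]
    (g p : ι → Matrix (Fin t) (Fin t) (MvPolynomial (Fin n) ℝ)) (hg : ∀ i, g i = 1 ∨ g i ∈ G) : InQM n t G (∑ i, (p i)ᵀ * g i * p i) :=
  ⟨Fintype.card ι, g ∘ (Fintype.equivFin ι).symm, p ∘ (Fintype.equivFin ι).symm,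
    fun _ => hg _, (Equiv.sum_comp _ _).symm⟩

theorem transpose_mul_self (p : Matrix (Fin t) (Fin t) (MvPolynomial (Fin n) ℝ)) :
    InQM n t G (pᵀ * p) := by
  simpa using of_fintype (G := G) (ι := Unit) (fun _ => 1) (fun _ => p) fun _ => .inl rfl

theorem sum {ι : Type*} [Fintype ι] {f : ι → Matrix (Fin t) (Fin t) (MvPolynomial (Fin n) ℝ)}
    (hf : ∀ i, InQM n t G (f i)) : InQM n t G (∑ i, f i) := by
  choose N g p hg hfgp using hf
  simp_rw [hfgp]
  rw [← Fintype.sum_sigma']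
  exact of_fintype _ _ fun x => hg x.1 x.2

theorem add (hf : InQM n t G f) (hf' : InQM n t G f') : InQM n t G (f + f') := by
  simpa using sum (f := ![f, f']) (by simp [Fin.forall_fin_two, hf, hf'])

theorem smul_of_nonneg {c : ℝ} (hc : 0 ≤ c) (hf : InQM n t G f) : InQM n t G (c • f) := by
  obtain ⟨N, g, p, hg, rfl⟩ := hf
  refine ⟨N, g, fun i => √c • p i, hg, ?_⟩
  simp only [Finset.smul_sum, transpose_smul, Matrix.smul_mul, Matrix.mul_smul, smul_smul,
    Real.mul_self_sqrt hc]

theorem vecMulVec_self (i₀ : Fin t) (w : Fin t → MvPolynomial (Fin n) ℝ) :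
    InQM n t G (vecMulVec w w) := by
  convert transpose_mul_self (of (Pi.single i₀ w)) using 1
  refine Matrix.ext fun k l => ?_
  simp [vecMulVec_apply, mul_apply, Pi.single_apply, ite_apply]

theorem dotProduct_self_smul_one_sub_vecMulVec (i₀ : Fin t) (v : Fin t → MvPolynomial (Fin n) ℝ) :
    InQM n t G ((v ⬝ᵥ v) • 1 - vecMulVec v v) := by
  have h := smul_of_nonneg (G := G) (c := 1 / 2) (by norm_num)
    (sum fun i => sum fun j => vecMulVec_self i₀ (v i • Pi.single j 1 - v j • Pi.single i 1))
  rwa [sum_vecMulVec_lagrange, ← Nat.cast_smul_eq_nsmul ℝ, smul_smul, one_div, Nat.cast_ofNat,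
    inv_mul_cancel₀ two_ne_zero, one_smul] at h

end InQM

theorem InQ.smul_one {G : Set (MvPolynomial (Fin n) ℝ)} {f : MvPolynomial (Fin n) ℝ}
    (hf : InQ n G f) :
    InQM n t ((fun g => g • (1 : Matrix (Fin t) (Fin t) (MvPolynomial (Fin n) ℝ))) '' G)
      (f • 1) := by
  obtain ⟨N, g, p, hg, rfl⟩ := hf
  refine ⟨N, fun i => g i • 1, fun i => p i • 1, fun i => ?_, ?_⟩
  · rcases hg i with h | h
    · exact .inl (by simp [h])
    · exact .inr ⟨g i, h, rfl⟩
  · rw [Finset.sum_smul]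
    refine Finset.sum_congr rfl fun i _ => ?_
    simp only [transpose_smul, transpose_one, Matrix.smul_mul, Matrix.mul_smul, one_mul,
      smul_smul]
    ring_nf

theorem InQM.trace {G : Set (MvPolynomial (Fin n) ℝ)}
    {f : Matrix (Fin t) (Fin t) (MvPolynomial (Fin n) ℝ)}
    (hf : InQM n t ((fun g => g • (1 : Matrix (Fin t) (Fin t) (MvPolynomial (Fin n) ℝ))) '' G) f) :
    InQ n G f.trace := by
  obtain ⟨N, g, p, hg, rfl⟩ := hf
  have hscalar : ∀ i, ∃ c, (c = 1 ∨ c ∈ G) ∧ g i = c • 1 := fun i => by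
    rcases hg i with h | ⟨c, hc, h⟩
    · exact ⟨1, .inl rfl, by rw [h, one_smul]⟩
    · exact ⟨c, .inr hc, h.symm⟩
  choose c hc hgc using hscalar
  simp only [trace_sum, hgc, Matrix.mul_smul, mul_one, Matrix.smul_mul, trace_smul,
    trace_transpose_mul_self, smul_eq_mul, mul_comm (c _), Finset.sum_mul]
  exact InQ.sum fun i => InQ.sum fun r => InQ.sum fun k => InQ.sq_mul _ (hc i)

/-- **Proposition 14.** For `G ⊆ ℝ[X̄]` and `t ≥ 1`, the scalar quadratic module `Q_G` is
archimedean if and only if the quadratic module `M_G` generated by `G·I` in `ℝ[X̄]^{t×t}`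
is archimedean. -/
theorem stmt16 (n t : ℕ) (ht : 0 < t) (G : Set (MvPolynomial (Fin n) ℝ)) :
    (∀ p : MvPolynomial (Fin n) ℝ,
        ∃ N : ℕ, InQ n G ((N : MvPolynomial (Fin n) ℝ) - p ^ 2)) ↔
      (∀ a : Matrix (Fin t) (Fin t) (MvPolynomial (Fin n) ℝ),
        ∃ N : ℕ,
          InQM n t ((fun g => g • (1 : Matrix (Fin t) (Fin t) (MvPolynomial (Fin n) ℝ))) '' G)
            ((N : Matrix (Fin t) (Fin t) (MvPolynomial (Fin n) ℝ)) - aᵀ * a)) := by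
  have i₀ : Fin t := ⟨0, ht⟩
  constructor
  · intro hQ a
    choose N hN using fun i j => hQ (a i j)
    refine ⟨∑ i, ∑ j, N i j, ?_⟩
    have hentries : InQ n G (∑ i, ∑ j, ((N i j : MvPolynomial (Fin n) ℝ) - a i j ^ 2)) :=
      InQ.sum fun i => InQ.sum fun j => hN i j
    have hrows := InQM.sum fun i => InQM.dotProduct_self_smul_one_sub_vecMulVec
      (G := (fun g => g • (1 : Matrix (Fin t) (Fin t) (MvPolynomial (Fin n) ℝ))) '' G) i₀ (a i)
    convert hentries.smul_one.add hrows using 1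
    rw [transpose_mul_self_eq_sum_vecMulVec]
    simp [Finset.sum_sub_distrib, sub_smul, Finset.sum_smul, dotProduct, sq,
      Nat.cast_smul_eq_nsmul]
  · intro hM p
    obtain ⟨N, hN⟩ := hM (single i₀ i₀ p)
    refine ⟨t * N, ?_⟩
    simpa [← diagonal_natCast, trace_diagonal, trace_sub, sq] using hN.trace
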